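/- Let dS, dE ≥ 1 and let μ be the uniform probability measure on the unit sphere of ℂ^{dS·dE}, with vectors indexed by the product type Fin dS × Fin dE. For a unit vector ψ, let ρ_S^ψ be its reduced density matrix, ρ_S^ψ(s,s′) = Σ_{e} ψ(s,e)·conj(ψ(s′,e)). Then the average purity of the subsystem satisfies Lubkin's formula: ∫ trace(ρ_S^ψ * ρ_S^ψ) dμ(ψ) = (dS + dE)/(dS·dE + 1). -/

import Mathlib

open Matrix MeasureTheory

noncomputable instance {ι : Type*} : MeasurableSpace (EuclideanSpace ℂ ι) := borel _

instance {ι : Type*} : BorelSpace (EuclideanSpace ℂ ι) := ⟨rfl⟩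

/-- The reduced density matrix of the pure state `|ψ⟩⟨ψ|`: the partial trace over the
environment, `ρ_S^ψ(s,s′) = Σ_e ψ(s,e)·conj(ψ(s′,e))`. -/
noncomputable def reducedState {dS dE : ℕ}
    (ψ : EuclideanSpace ℂ (Fin dS × Fin dE)) : Matrix (Fin dS) (Fin dS) ℂ :=
  Matrix.of fun s s' => ∑ e : Fin dE, ψ (s, e) * star (ψ (s', e))

/-- `μ` is the uniform probability measure on the unit sphere of `ℂ^ι`: a Borel
probability measure invariant under every unitary rotation of `ℂ^ι`. (The normalized
rotation-invariant surface measure is the unique such measure.) -/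
def IsUniformSphereMeasure {ι : Type*} [Fintype ι] [DecidableEq ι]
    (μ : Measure (Metric.sphere (0 : EuclideanSpace ℂ ι) 1)) : Prop :=
  IsProbabilityMeasure μ ∧
    ∀ U : Matrix ι ι ℂ, U ∈ Matrix.unitaryGroup ι ℂ →
      Measure.map
        (fun ψ : EuclideanSpace ℂ ι =>
          (WithLp.equiv 2 (ι → ℂ)).symm (U.mulVec ((WithLp.equiv 2 (ι → ℂ)) ψ)))
        (Measure.map Subtype.val μ) = Measure.map Subtype.val μ

namespace Lubkin

variable {ι : Type*} [Fintype ι] [DecidableEq ι]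

abbrev Sph (ι : Type*) [Fintype ι] := Metric.sphere (0 : EuclideanSpace ℂ ι) 1

/-! ### Generic sum helpers -/

lemma sum_ite_pair {p q : ι} (h : p ≠ q) (f : ι → ℂ) (a b : ℂ)
    (hp : f p = a) (hq : f q = b) (h0 : ∀ y, y ≠ p → y ≠ q → f y = 0) :
    ∑ y : ι, f y = a + b := by
  have h1 : ∑ y : ι, f y = f p + ∑ y ∈ Finset.univ.erase p, f y :=
    (Finset.add_sum_erase _ f (Finset.mem_univ p)).symm
  have hq' : q ∈ Finset.univ.erase p := Finset.mem_erase.mpr ⟨h.symm, Finset.mem_univ q⟩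
  have h2 : ∑ y ∈ Finset.univ.erase p, f y =
      f q + ∑ y ∈ (Finset.univ.erase p).erase q, f y :=
    (Finset.add_sum_erase _ f hq').symm
  have h3 : ∑ y ∈ (Finset.univ.erase p).erase q, f y = 0 := by
    apply Finset.sum_eq_zero
    intro y hy
    simp only [Finset.mem_erase] at hy
    exact h0 y hy.2.1 hy.1
  rw [h1, h2, h3, hp, hq, add_zero]

lemma sum_diag_ite {κ : Type*} [Fintype κ] [DecidableEq κ] (X Y : ℂ) :
    ∑ a : κ, ∑ b : κ, (if a = b then X else Y) =
      (Fintype.card κ : ℂ) * X +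
        (Fintype.card κ : ℂ) * ((Fintype.card κ : ℂ) - 1) * Y := by
  have h1 : ∀ a : κ, ∑ b : κ, (if a = b then X else Y) =
      X + ((Fintype.card κ : ℂ) - 1) * Y := by
    intro a
    have := Fintype.card_pos_iff.mpr ⟨a⟩
    rw [← Finset.add_sum_erase _ _ (Finset.mem_univ a), if_pos rfl]
    congr 1
    rw [Finset.sum_congr rfl (fun b hb => if_neg (fun hab =>
      (Finset.mem_erase.mp hb).1 hab.symm)), Finset.sum_const,
      Finset.card_erase_of_mem (Finset.mem_univ a), Finset.card_univ, nsmul_eq_mul,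
      Nat.cast_sub this]
    simp
  rw [Finset.sum_congr rfl (fun a _ => h1 a), Finset.sum_const, Finset.card_univ,
    nsmul_eq_mul]
  ring

/-! ### Unitary matrices: permutation, phase, Hadamard -/

def permMat (σ : Equiv.Perm ι) : Matrix ι ι ℂ :=
  Matrix.of fun x y => if y = σ x then 1 else 0

lemma permMat_mem (σ : Equiv.Perm ι) : permMat σ ∈ Matrix.unitaryGroup ι ℂ := by
  rw [Matrix.mem_unitaryGroup_iff]
  ext x z
  simp only [Matrix.mul_apply, permMat, Matrix.of_apply, Matrix.conjTranspose_apply,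
    Matrix.one_apply, apply_ite (star : ℂ → ℂ), star_one, star_zero]
  rw [Finset.sum_eq_single (σ x)]
  · simp [eq_comm, σ.injective.eq_iff]
  · intro b _ hb; simp [hb]
  · simp

lemma permMat_mulVec (σ : Equiv.Perm ι) (v : ι → ℂ) :
    (permMat σ).mulVec v = fun x => v (σ x) := by
  funext x
  simp [Matrix.mulVec, dotProduct, permMat]

noncomputable def phaseMat (m : ι) : Matrix ι ι ℂ :=
  Matrix.diagonal (fun x => if x = m then Complex.I else 1)

lemma phaseMat_mem (m : ι) : phaseMat m ∈ Matrix.unitaryGroup ι ℂ := by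
  rw [Matrix.mem_unitaryGroup_iff]
  have : phaseMat m * star (phaseMat m) =
      Matrix.diagonal (fun x => (if x = m then Complex.I else 1) *
        star (if x = m then Complex.I else 1)) := by
    simp [phaseMat, Matrix.star_eq_conjTranspose, Matrix.diagonal_conjTranspose,
      Matrix.diagonal_mul_diagonal]
  rw [this]
  have h : (fun x : ι => (if x = m then Complex.I else 1) *
      star (if x = m then Complex.I else 1)) = fun _ => (1:ℂ) := by
    funext x; split_ifs <;> simp [Complex.star_def, Complex.conj_I, Complex.I_mul_I]
  rw [h, Matrix.diagonal_one]

lemma phaseMat_mulVec (m : ι) (v : ι → ℂ) :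
    (phaseMat m).mulVec v = fun x => (if x = m then Complex.I else 1) * v x := by
  funext x
  simp [phaseMat, Matrix.mulVec_diagonal]

noncomputable def rr : ℂ := ((Real.sqrt 2)⁻¹ : ℝ)

lemma star_rr : star rr = rr := Complex.conj_ofReal _

lemma rr_mul : rr * rr = 1/2 := by
  rw [rr, ← Complex.ofReal_mul, ← mul_inv, Real.mul_self_sqrt (by norm_num : (0:ℝ) ≤ 2)]
  norm_num

noncomputable def hadMat (p q : ι) : Matrix ι ι ℂ :=
  Matrix.of fun x y =>
    if x = p then (if y = p then rr else if y = q then rr else 0)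
    else if x = q then (if y = p then rr else if y = q then -rr else 0)
    else if y = x then 1 else 0

lemma hadMat_mem {p q : ι} (h : p ≠ q) : hadMat p q ∈ Matrix.unitaryGroup ι ℂ := by
  rw [Matrix.mem_unitaryGroup_iff]
  ext x z
  simp only [Matrix.mul_apply, Matrix.conjTranspose_apply, hadMat, Matrix.of_apply]
  by_cases hxp : x = p <;> by_cases hxq : x = q <;>
    by_cases hzp : z = p <;> by_cases hzq : z = q
  all_goals try exact absurd (hxp.symm.trans hxq) h
  all_goals try exact absurd (hzp.symm.trans hzq) h
  · rw [hxp, hzp]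
    rw [sum_ite_pair h _ (rr * star rr) (rr * star rr) (by simp) (by simp [h])
      (fun y hyp hyq => by simp [hyp, hyq])]
    simp [star_rr, rr_mul, Matrix.one_apply]
    norm_num
  · rw [hxp, hzq]
    rw [sum_ite_pair h _ (rr * star rr) (rr * star (-rr)) (by simp [h]) (by simp [h, Ne.symm h])
      (fun y hyp hyq => by simp [hyp, hyq])]
    simp [star_rr, star_neg, rr_mul, Matrix.one_apply, h]
  · rw [hxp]
    rw [Finset.sum_eq_zero (fun y _ => by
      by_cases hyz : y = z
      · subst hyz; simp [hzp, hzq]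
      · simp [hyz, hzp, hzq])]
    exact (Matrix.one_apply_ne (fun hh : (p:ι) = z => hzp hh.symm)).symm
  · rw [hxq, hzp]
    rw [sum_ite_pair h _ (rr * star rr) ((-rr) * star rr) (by simp [h, Ne.symm h])
      (by simp [h, Ne.symm h]) (fun y hyp hyq => by simp [hyp, hyq])]
    simp [star_rr, rr_mul, Matrix.one_apply, Ne.symm h]
  · rw [hxq, hzq]
    rw [sum_ite_pair h _ (rr * star rr) ((-rr) * star (-rr)) (by simp [h, Ne.symm h])
      (by simp [h, Ne.symm h]) (fun y hyp hyq => by simp [hyp, hyq])]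
    simp [star_rr, star_neg, rr_mul, Matrix.one_apply]
    norm_num
  · rw [hxq]
    rw [Finset.sum_eq_zero (fun y _ => by
      by_cases hyz : y = z
      · subst hyz; simp [hzp, hzq]
      · simp [hyz, hzp, hzq])]
    exact (Matrix.one_apply_ne (fun hh : (q:ι) = z => hzq hh.symm)).symm
  · rw [hzp]
    rw [Finset.sum_eq_zero (fun y _ => by
      by_cases hyx : y = x
      · subst hyx; simp [hxp, hxq]
      · simp [hyx, hxp, hxq])]
    simp [Matrix.one_apply, hxp]
  · rw [hzq]
    rw [Finset.sum_eq_zero (fun y _ => by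
      by_cases hyx : y = x
      · subst hyx; simp [hxp, hxq]
      · simp [hyx, hxp, hxq])]
    simp [Matrix.one_apply, hxq]
  · rw [Finset.sum_eq_single x (fun y _ hyx => by simp [hyx, hxp, hxq]) (by simp)]
    simp [hxp, hxq, hzp, hzq, Matrix.one_apply, apply_ite (star : ℂ → ℂ)]

lemma hadMat_mulVec {p q : ι} (h : p ≠ q) (v : ι → ℂ) :
    (hadMat p q).mulVec v = fun x =>
      if x = p then rr * (v p + v q) else if x = q then rr * (v p - v q) else v x := by
  funext x
  simp only [Matrix.mulVec, dotProduct, hadMat, Matrix.of_apply]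
  by_cases hxp : x = p
  · rw [hxp]
    rw [sum_ite_pair h _ (rr * v p) (rr * v q) (by simp) (by simp [h, Ne.symm h])
      (fun y hyp hyq => by simp [hyp, hyq])]
    simp; ring
  · by_cases hxq : x = q
    · rw [hxq]
      rw [sum_ite_pair h _ (rr * v p) ((-rr) * v q) (by simp [h, Ne.symm h])
        (by simp [h, Ne.symm h]) (fun y hyp hyq => by simp [hyp, hyq])]
      simp [hxp, Ne.symm h]; ring
    · rw [Finset.sum_eq_single x (fun y _ hyx => by simp [hyx, hxp, hxq]) (by simp)]
      simp [hxp, hxq]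


/-! ### Moments -/

def mono (i j k l : ι) : EuclideanSpace ℂ ι → ℂ :=
  fun ψ => ψ i * ψ j * star (ψ k) * star (ψ l)

lemma cont_coord (i : ι) : Continuous (fun ψ : EuclideanSpace ℂ ι => ψ i) := by fun_prop

lemma cont_mono (i j k l : ι) : Continuous (mono i j k l) := by
  unfold mono
  exact (((cont_coord i).mul (cont_coord j)).mul
    (continuous_star.comp (cont_coord k))).mul (continuous_star.comp (cont_coord l))

variable (μ : Measure (Sph ι))

noncomputable def mom (i j k l : ι) : ℂ :=
  ∫ ψ : Sph ι, mono i j k l (ψ : EuclideanSpace ℂ ι) ∂μ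

lemma integrable_cont [IsProbabilityMeasure μ] (g : EuclideanSpace ℂ ι → ℂ)
    (hg : Continuous g) :
    Integrable (fun ψ : Sph ι => g (ψ : EuclideanSpace ℂ ι)) μ := by
  have hc : Continuous (fun ψ : Sph ι => g (ψ : EuclideanSpace ℂ ι)) :=
    hg.comp continuous_subtype_val
  exact hc.integrable_of_hasCompactSupport (HasCompactSupport.of_compactSpace _)

lemma integrable_mono [IsProbabilityMeasure μ] (i j k l : ι) :
    Integrable (fun ψ : Sph ι => mono i j k l (ψ : EuclideanSpace ℂ ι)) μ :=
  integrable_cont μ _ (cont_mono i j k l)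

lemma integral_comp_unitary (hμ : IsUniformSphereMeasure μ) {U : Matrix ι ι ℂ}
    (hU : U ∈ Matrix.unitaryGroup ι ℂ) (g : EuclideanSpace ℂ ι → ℂ) (hg : Continuous g) :
    (∫ ψ : Sph ι,
        g ((WithLp.equiv 2 (ι → ℂ)).symm (U.mulVec ((WithLp.equiv 2 (ι → ℂ))
          (ψ : EuclideanSpace ℂ ι)))) ∂μ) =
      ∫ ψ : Sph ι, g (ψ : EuclideanSpace ℂ ι) ∂μ := by
  set T : EuclideanSpace ℂ ι → EuclideanSpace ℂ ι := fun ψ =>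
    (WithLp.equiv 2 (ι → ℂ)).symm (U.mulVec ((WithLp.equiv 2 (ι → ℂ)) ψ)) with hT
  have hTc : Continuous T := by
    have h1 : Continuous (fun v : ι → ℂ => U.mulVec v) :=
      LinearMap.continuous_of_finiteDimensional U.mulVecLin
    exact (PiLp.continuous_toLp 2 (fun _ : ι => ℂ)).comp
      (h1.comp (PiLp.continuous_ofLp 2 (fun _ : ι => ℂ)))
  have h1 : (∫ ψ : Sph ι, g (T (ψ : EuclideanSpace ℂ ι)) ∂μ) =
      ∫ x, g (T x) ∂(Measure.map Subtype.val μ) :=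
    (integral_map (φ := Subtype.val) (f := fun x => g (T x))
      measurable_subtype_coe.aemeasurable ((hg.comp hTc).aestronglyMeasurable)).symm
  have h2 : (∫ x, g (T x) ∂(Measure.map Subtype.val μ)) =
      ∫ x, g x ∂(Measure.map T (Measure.map Subtype.val μ)) :=
    (integral_map hTc.measurable.aemeasurable hg.aestronglyMeasurable).symm
  rw [h1, h2, hμ.2 U hU,
    integral_map measurable_subtype_coe.aemeasurable hg.aestronglyMeasurable]

lemma mom_perm (hμ : IsUniformSphereMeasure μ) (σ : Equiv.Perm ι) (i j k l : ι) :
    mom μ (σ i) (σ j) (σ k) (σ l) = mom μ i j k l := by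
  have h := integral_comp_unitary μ hμ (permMat_mem σ) (mono i j k l) (cont_mono i j k l)
  rw [mom, mom, ← h]
  apply integral_congr_ae
  filter_upwards with ψ
  simp [mono, permMat_mulVec, WithLp.equiv_symm_apply, WithLp.equiv_apply, PiLp.toLp_apply]

lemma mom_phase_zero (hμ : IsUniformSphereMeasure μ) (m : ι) {i j k l : ι}
    (hc : (if i = m then Complex.I else 1) * (if j = m then Complex.I else 1) *
        star (if k = m then Complex.I else 1) *
        star (if l = m then Complex.I else 1) ≠ 1) :
    mom μ i j k l = 0 := by
  set c : ℂ := (if i = m then Complex.I else 1) * (if j = m then Complex.I else 1) *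
      star (if k = m then Complex.I else 1) * star (if l = m then Complex.I else 1) with hcdef
  have h := integral_comp_unitary μ hμ (phaseMat_mem m) (mono i j k l) (cont_mono i j k l)
  have h2 : (∫ ψ : Sph ι,
      mono i j k l ((WithLp.equiv 2 (ι → ℂ)).symm ((phaseMat m).mulVec
        ((WithLp.equiv 2 (ι → ℂ)) (ψ : EuclideanSpace ℂ ι)))) ∂μ) = c * mom μ i j k l := by
    rw [mom, ← integral_const_mul]
    apply integral_congr_ae
    filter_upwards with ψ
    simp only [mono, phaseMat_mulVec, WithLp.equiv_symm_apply, WithLp.equiv_apply, PiLp.toLp_apply,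
      hcdef, star_mul']
    ring
  have h3 : c * mom μ i j k l = mom μ i j k l := by rw [← h2]; exact h
  by_contra hM
  exact hc (mul_right_cancel₀ hM (by rw [h3, one_mul]))

lemma mom_swap12 (i j k l : ι) : mom μ i j k l = mom μ j i k l := by
  apply integral_congr_ae
  filter_upwards with ψ
  simp only [mono]; ring

lemma mom_swap34 (i j k l : ι) : mom μ i j k l = mom μ i j l k := by
  apply integral_congr_ae
  filter_upwards with ψ
  simp only [mono]; ring

lemma mom_diag_eq (hμ : IsUniformSphereMeasure μ) (i i' : ι) :
    mom μ i i i i = mom μ i' i' i' i' := by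
  have h := mom_perm μ hμ (Equiv.swap i' i) i' i' i' i'
  rwa [Equiv.swap_apply_left] at h

lemma mom_off_eq (hμ : IsUniformSphereMeasure μ) {p q i j : ι} (hpq : p ≠ q)
    (hij : i ≠ j) : mom μ i j i j = mom μ p q p q := by
  set σ : Equiv.Perm ι :=
    (Equiv.swap p i).trans (Equiv.swap (Equiv.swap p i q) j) with hσ
  have hne : Equiv.swap p i q ≠ i := by
    intro hh
    have : Equiv.swap p i (Equiv.swap p i q) = Equiv.swap p i i := congrArg _ hh
    rw [Equiv.swap_apply_self, Equiv.swap_apply_right] at this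
    exact hpq this.symm
  have hσp : σ p = i := by
    simp only [hσ, Equiv.trans_apply, Equiv.swap_apply_left]
    exact Equiv.swap_apply_of_ne_of_ne hne.symm (Ne.symm hij.symm)
  have hσq : σ q = j := by
    simp only [hσ, Equiv.trans_apply]
    exact Equiv.swap_apply_left _ _
  have h := mom_perm μ hμ σ p q p q
  rwa [hσp, hσq] at h

lemma norm_constraint (hμ : IsUniformSphereMeasure μ) :
    ∑ i : ι, ∑ j : ι, mom μ i j i j = 1 := by
  haveI := hμ.1
  have h1 : ∀ ψ : Sph ι,
      (∑ i : ι, ∑ j : ι, mono i j i j (ψ : EuclideanSpace ℂ ι)) = 1 := by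
    intro ψ
    have hsum : ∀ i : ι, ∀ j : ι, mono i j i j (ψ : EuclideanSpace ℂ ι) =
        ((ψ : EuclideanSpace ℂ ι) i * star ((ψ : EuclideanSpace ℂ ι) i)) *
        ((ψ : EuclideanSpace ℂ ι) j * star ((ψ : EuclideanSpace ℂ ι) j)) := by
      intro i j; simp only [mono]; ring
    have hone : (∑ i : ι, (ψ : EuclideanSpace ℂ ι) i * star ((ψ : EuclideanSpace ℂ ι) i))
        = 1 := by
      have hinner : (inner ℂ (ψ : EuclideanSpace ℂ ι) (ψ : EuclideanSpace ℂ ι) : ℂ) =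
          ∑ i : ι, star ((ψ : EuclideanSpace ℂ ι) i) * (ψ : EuclideanSpace ℂ ι) i := by
        rw [PiLp.inner_apply]
        refine Finset.sum_congr rfl fun i _ => ?_
        rw [RCLike.inner_apply, Complex.star_def]
        ring
      have hns : (inner ℂ (ψ : EuclideanSpace ℂ ι) (ψ : EuclideanSpace ℂ ι) : ℂ) =
          (‖(ψ : EuclideanSpace ℂ ι)‖ : ℂ) ^ 2 := inner_self_eq_norm_sq_to_K _
      have hψ : ‖(ψ : EuclideanSpace ℂ ι)‖ = 1 :=
        mem_sphere_zero_iff_norm.mp ψ.2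
      rw [Finset.sum_congr rfl (fun i _ => mul_comm _ _), ← hinner, hns, hψ]
      norm_num
    calc (∑ i : ι, ∑ j : ι, mono i j i j (ψ : EuclideanSpace ℂ ι))
        = (∑ i : ι, (ψ : EuclideanSpace ℂ ι) i * star ((ψ : EuclideanSpace ℂ ι) i)) *
          (∑ j : ι, (ψ : EuclideanSpace ℂ ι) j * star ((ψ : EuclideanSpace ℂ ι) j)) := by
          rw [Finset.sum_mul_sum]
          exact Finset.sum_congr rfl fun i _ => Finset.sum_congr rfl fun j _ => hsum i j
      _ = 1 := by rw [hone]; norm_num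
  have h2 : ∑ i : ι, ∑ j : ι, mom μ i j i j =
      ∫ ψ : Sph ι, (∑ i : ι, ∑ j : ι, mono i j i j (ψ : EuclideanSpace ℂ ι)) ∂μ := by
    rw [integral_finset_sum _ (fun i _ => integrable_finset_sum _
      (fun j _ => integrable_mono μ i j i j))]
    exact Finset.sum_congr rfl fun i _ =>
      (integral_finset_sum _ (fun j _ => integrable_mono μ i j i j)).symm
  rw [h2]
  simp only [h1]
  simp


lemma had_expand (u v : ℂ) :
    (rr*(u+v)) * (rr*(u+v)) * star (rr*(u+v)) * star (rr*(u+v)) =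
      (1/4) * ((u*u*star u*star u) + (u*u*star u*star v) + (u*u*star v*star u)
        + (u*u*star v*star v) + (u*v*star u*star u) + (u*v*star u*star v)
        + (u*v*star v*star u) + (u*v*star v*star v) + (v*u*star u*star u)
        + (v*u*star u*star v) + (v*u*star v*star u) + (v*u*star v*star v)
        + (v*v*star u*star u) + (v*v*star u*star v) + (v*v*star v*star u)
        + (v*v*star v*star v)) := by
  simp only [star_mul', star_add, star_rr]
  linear_combination (rr*rr + 1/2) *
    ((u+v)*(u+v)*(star u + star v)*(star u + star v)) * rr_mul

lemma mom_had (hμ : IsUniformSphereMeasure μ) {p q : ι} (hpq : p ≠ q) :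
    mom μ p p p p = 2 * mom μ p q p q := by
  haveI := hμ.1
  have h := integral_comp_unitary μ hμ (hadMat_mem hpq) (mono p p p p) (cont_mono p p p p)
  have hcq : (![p, q] : Fin 2 → ι) 1 = q := rfl
  have hpt : ∀ ψ : Sph ι,
      mono p p p p ((WithLp.equiv 2 (ι → ℂ)).symm ((hadMat p q).mulVec
        ((WithLp.equiv 2 (ι → ℂ)) (ψ : EuclideanSpace ℂ ι)))) =
      (1/4 : ℂ) * ∑ t : Fin 2 × Fin 2 × Fin 2 × Fin 2,
        mono (![p,q] t.1) (![p,q] t.2.1) (![p,q] t.2.2.1) (![p,q] t.2.2.2) (ψ : EuclideanSpace ℂ ι) := by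
    intro ψ
    simp only [mono, hadMat_mulVec hpq, WithLp.equiv_symm_apply, WithLp.equiv_apply, PiLp.toLp_apply,
      if_pos rfl, ite_true]
    rw [had_expand]
    simp [Fintype.sum_prod_type, Fin.sum_univ_two]
    ring
  have h2 : mom μ p p p p = (1/4 : ℂ) * ∑ t : Fin 2 × Fin 2 × Fin 2 × Fin 2,
      mom μ (![p,q] t.1) (![p,q] t.2.1) (![p,q] t.2.2.1) (![p,q] t.2.2.2) := by
    rw [mom, ← h]
    rw [integral_congr_ae (Filter.Eventually.of_forall hpt)]
    rw [integral_const_mul, integral_finset_sum _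
      (fun t _ => integrable_mono μ (![p,q] t.1) (![p,q] t.2.1) (![p,q] t.2.2.1) (![p,q] t.2.2.2))]
    rfl
  have hqq : mom μ q q q q = mom μ p p p p := mom_diag_eq μ hμ q p
  have e1 : mom μ p q q p = mom μ p q p q := mom_swap34 μ p q q p
  have e2 : mom μ q p p q = mom μ p q p q := mom_swap12 μ q p p q
  have e3 : mom μ q p q p = mom μ p q p q := by
    rw [mom_swap12 μ q p q p, mom_swap34 μ p q q p]
  have z1 : mom μ p p p q = 0 := mom_phase_zero μ hμ p (by
    norm_num [Ne.symm hpq, Complex.star_def, Complex.conj_I, Complex.ext_iff])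
  have z2 : mom μ p p q p = 0 := mom_phase_zero μ hμ p (by
    norm_num [Ne.symm hpq, Complex.star_def, Complex.conj_I, Complex.ext_iff])
  have z3 : mom μ p p q q = 0 := mom_phase_zero μ hμ p (by
    norm_num [Ne.symm hpq, Complex.star_def, Complex.conj_I, Complex.ext_iff])
  have z4 : mom μ p q p p = 0 := mom_phase_zero μ hμ p (by
    norm_num [Ne.symm hpq, Complex.star_def, Complex.conj_I, Complex.ext_iff])
  have z5 : mom μ p q q q = 0 := mom_phase_zero μ hμ p (by
    norm_num [Ne.symm hpq, Complex.star_def, Complex.conj_I, Complex.ext_iff])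
  have z6 : mom μ q p p p = 0 := mom_phase_zero μ hμ p (by
    norm_num [Ne.symm hpq, Complex.star_def, Complex.conj_I, Complex.ext_iff])
  have z7 : mom μ q p q q = 0 := mom_phase_zero μ hμ p (by
    norm_num [Ne.symm hpq, Complex.star_def, Complex.conj_I, Complex.ext_iff])
  have z8 : mom μ q q p p = 0 := mom_phase_zero μ hμ p (by
    norm_num [Ne.symm hpq, Complex.star_def, Complex.conj_I, Complex.ext_iff])
  have z9 : mom μ q q p q = 0 := mom_phase_zero μ hμ p (by
    norm_num [Ne.symm hpq, Complex.star_def, Complex.conj_I, Complex.ext_iff])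
  have z10 : mom μ q q q p = 0 := mom_phase_zero μ hμ p (by
    norm_num [Ne.symm hpq, Complex.star_def, Complex.conj_I, Complex.ext_iff])
  simp [Fintype.sum_prod_type, Fin.sum_univ_two,
    z1, z2, z3, z4, z5, z6, z7, z8, z9, z10, e1, e2, e3, hqq] at h2
  linear_combination (2 : ℂ) * h2

end Lubkin

open Lubkin

/-- Lubkin's formula: the average purity of the reduced state of a
uniformly random pure state of the composite system is `(dS + dE)/(dS·dE + 1)`. -/
theorem lubkin_average_purity
    (dS dE : ℕ) (hdS : 1 ≤ dS) (hdE : 1 ≤ dE)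
    (μ : Measure (Metric.sphere (0 : EuclideanSpace ℂ (Fin dS × Fin dE)) 1))
    (hμ : IsUniformSphereMeasure μ) :
    (∫ ψ : Metric.sphere (0 : EuclideanSpace ℂ (Fin dS × Fin dE)) 1,
        (reducedState (ψ : EuclideanSpace ℂ (Fin dS × Fin dE)) *
          reducedState (ψ : EuclideanSpace ℂ (Fin dS × Fin dE))).trace ∂μ) =
      ((dS : ℂ) + (dE : ℂ)) / ((dS : ℂ) * (dE : ℂ) + 1) := by
  classical
  haveI := hμ.1
  have htr : ∀ ψ : EuclideanSpace ℂ (Fin dS × Fin dE),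
      (reducedState ψ * reducedState ψ).trace =
      ∑ s : Fin dS, ∑ s' : Fin dS, ∑ e : Fin dE, ∑ e' : Fin dE,
        mono (s,e) (s',e') (s',e) (s,e') ψ := by
    intro ψ
    simp only [Matrix.trace, Matrix.diag_apply, Matrix.mul_apply, reducedState,
      Matrix.of_apply, mono]
    refine Finset.sum_congr rfl fun s _ => Finset.sum_congr rfl fun s' _ => ?_
    rw [Finset.sum_mul_sum]
    exact Finset.sum_congr rfl fun e _ => Finset.sum_congr rfl fun e' _ => by ring
  have hmain : (∫ ψ : Metric.sphere (0 : EuclideanSpace ℂ (Fin dS × Fin dE)) 1,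
        (reducedState (ψ : EuclideanSpace ℂ (Fin dS × Fin dE)) *
          reducedState (ψ : EuclideanSpace ℂ (Fin dS × Fin dE))).trace ∂μ) =
      ∑ s : Fin dS, ∑ s' : Fin dS, ∑ e : Fin dE, ∑ e' : Fin dE,
        mom μ (s,e) (s',e') (s',e) (s,e') := by
    rw [integral_congr_ae (Filter.Eventually.of_forall fun ψ => htr _)]
    rw [integral_finset_sum _ (fun s _ => integrable_finset_sum _ (fun s' _ =>
      integrable_finset_sum _ (fun e _ => integrable_finset_sum _ (fun e' _ =>
        integrable_mono μ _ _ _ _))))]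
    refine Finset.sum_congr rfl fun s _ => ?_
    rw [integral_finset_sum _ (fun s' _ => integrable_finset_sum _ (fun e _ =>
      integrable_finset_sum _ (fun e' _ => integrable_mono μ _ _ _ _)))]
    refine Finset.sum_congr rfl fun s' _ => ?_
    rw [integral_finset_sum _ (fun e _ =>
      integrable_finset_sum _ (fun e' _ => integrable_mono μ _ _ _ _))]
    refine Finset.sum_congr rfl fun e _ => ?_
    rw [integral_finset_sum _ (fun e' _ => integrable_mono μ _ _ _ _)]
    rfl
  by_cases hcard : 1 < Fintype.card (Fin dS × Fin dE)
  · obtain ⟨p, q, hpq⟩ := Fintype.exists_pair_of_one_lt_card hcard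
    set A := mom μ p p p p with hA
    set B := mom μ p q p q with hB
    have hdiag : ∀ i, mom μ i i i i = A := fun i => mom_diag_eq μ hμ i p
    have hoff : ∀ i j, i ≠ j → mom μ i j i j = B := fun i j hij => mom_off_eq μ hμ hpq hij
    have hA2B : A = 2 * B := mom_had μ hμ hpq
    have hij : ∀ i j : Fin dS × Fin dE, mom μ i j i j = if i = j then A else B := by
      intro i j
      by_cases h : i = j
      · subst h; simp [hdiag]
      · simp [h, hoff i j h]
    have hcon : ((dS : ℂ) * dE) * A + ((dS : ℂ) * dE) * ((dS : ℂ) * dE - 1) * B = 1 := by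
      have h0 := norm_constraint μ hμ
      rw [Finset.sum_congr rfl (fun i _ => Finset.sum_congr rfl (fun j _ => hij i j)),
        sum_diag_ite] at h0
      simp only [Fintype.card_prod, Fintype.card_fin] at h0
      push_cast at h0
      convert h0 using 2 <;> push_cast <;> ring
    have hval : ∀ (s s' : Fin dS) (e e' : Fin dE),
        mom μ (s,e) (s',e') (s',e) (s,e') =
        if s = s' then (if e = e' then A else B) else (if e = e' then B else 0) := by
      intro s s' e e'
      by_cases hss : s = s' <;> by_cases hee : e = e'
      · subst hss; subst hee; simp [hdiag]
      · subst hss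
        simp only [if_pos rfl, if_neg hee]
        exact hoff _ _ (by simp [Prod.ext_iff, hee])
      · subst hee
        simp only [if_neg hss, if_pos rfl]
        rw [mom_swap34 μ (s,e) (s',e) (s',e) (s,e)]
        exact hoff _ _ (by simp [Prod.ext_iff, hss])
      · simp only [if_neg hss, if_neg hee]
        apply mom_phase_zero μ hμ (s,e)
        have h1 : ((s',e') : Fin dS × Fin dE) ≠ (s,e) := by
          simp [Prod.ext_iff]; intro h; exact absurd h.symm hss
        have h2 : ((s',e) : Fin dS × Fin dE) ≠ (s,e) := by
          simp [Prod.ext_iff]; intro h; exact absurd h.symm hss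
        have h3 : ((s,e') : Fin dS × Fin dE) ≠ (s,e) := by
          simp only [ne_eq, Prod.mk.injEq, not_and]
          exact fun _ h => hee h.symm
        rw [if_pos rfl, if_neg h1, if_neg h2, if_neg h3]
        simp only [star_one, mul_one]
        intro h
        simpa using congrArg Complex.im h
    rw [hmain]
    have hinner : ∀ s s' : Fin dS,
        (∑ e : Fin dE, ∑ e' : Fin dE, mom μ (s,e) (s',e') (s',e) (s,e')) =
        if s = s' then ((dE:ℂ) * A + (dE:ℂ) * ((dE:ℂ) - 1) * B) else (dE:ℂ) * B := by
      intro s s'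
      rw [Finset.sum_congr rfl (fun e _ => Finset.sum_congr rfl (fun e' _ => hval s s' e e'))]
      by_cases hss : s = s'
      · simp only [if_pos hss]
        rw [sum_diag_ite]; simp
      · simp only [if_neg hss]
        rw [sum_diag_ite]; simp
    rw [Finset.sum_congr rfl (fun s _ => Finset.sum_congr rfl (fun s' _ => hinner s s')),
      sum_diag_ite]
    simp only [Fintype.card_fin]
    have hne : ((dS : ℂ) * dE + 1) ≠ 0 := by
      have : ((dS * dE + 1 : ℕ) : ℂ) ≠ 0 := Nat.cast_ne_zero.mpr (Nat.succ_ne_zero _)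
      push_cast at this
      exact this
    rw [eq_div_iff hne]
    linear_combination ((dS:ℂ)+dE) * hcon +
      (((dS:ℂ)*dE)*((dS:ℂ)*dE+1) - ((dS:ℂ)+dE)*((dS:ℂ)*dE)) * hA2B
  · have hc1 : Fintype.card (Fin dS × Fin dE) = 1 := by
      have h1 : 1 ≤ Fintype.card (Fin dS × Fin dE) := by
        simp only [Fintype.card_prod, Fintype.card_fin]
        exact Nat.one_le_iff_ne_zero.mpr (Nat.mul_ne_zero (by omega) (by omega))
      omega
    simp only [Fintype.card_prod, Fintype.card_fin] at hc1
    have hS : dS = 1 := Nat.dvd_one.mp ⟨dE, hc1.symm⟩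
    have hE : dE = 1 := Nat.dvd_one.mp ⟨dS, by rw [mul_comm] at hc1; exact hc1.symm⟩
    subst hS; subst hE
    have h0 := norm_constraint μ hμ
    have huniq : ∀ i : Fin 1 × Fin 1, i = ((0 : Fin 1), (0 : Fin 1)) := by
      intro i; exact Subsingleton.elim _ _
    rw [hmain]
    simp only [Fin.sum_univ_one]
    simp only [Fintype.sum_prod_type, Fin.sum_univ_one] at h0
    rw [h0]
    norm_num
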